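/- Suppose Eve's channel is a BEC and coset coding with parity check matrix A = [a_1 ... a_n] ∈ F_2^{m×n} (of full row rank) is used. For any received word z^n, the conditional information leakage satisfies L(z^n) = H(S^m) - H(S^m | Z^n = z^n) = m - rank([a_j : z_j = e]), where [a_j : z_j = e] is the submatrix of A formed by the columns at erased positions. -/

import Mathlib

/-! Given `z`, the inputs `x` compatible with `z` form the coset `x₀ + U`, where `x₀` is `z` with
its erasures replaced by `0` and `U` is spanned by the unit vectors at the erased positions, and
they all have the same likelihood. So the number of them with `A x = s` is `|ker A ∩ U|` when
`s ∈ A x₀ + A U` and `0` otherwise: the posterior of `S` is uniform on a coset of `A U`, the span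
of the erased columns, and its entropy is the rank of those columns. Since `A = [I | A₂]` is
surjective, all fibres of `A` have the same size, so `S` is uniform with entropy `m`. -/

open Finset

/-- Shannon entropy in bits of a pmf on a finite type. -/
noncomputable def ent {α : Type*} [Fintype α] (p : α → ℝ) : ℝ :=
  -∑ a, p a * Real.logb 2 (p a)

/-- The parity check matrix `A = [I_m | A_2]`. -/
def pcheck {m k : ℕ} (A2 : Matrix (Fin m) (Fin k) (ZMod 2)) :
    Matrix (Fin m) (Fin m ⊕ Fin k) (ZMod 2) :=
  Matrix.of fun j => Sum.elim (fun j' => if j = j' then 1 else 0) (fun i => A2 j i)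

/-- BEC(ε) transition probabilities: `none` is the erasure symbol. -/
def becW (ε : ℝ) : Option (ZMod 2) → ZMod 2 → ℝ
  | none, _ => ε
  | some b, x => if b = x then 1 - ε else 0

/-- Joint pmf of `S^m` and Eve's BEC observation `Z^n` under coset coding. -/
noncomputable def pSZbec {m k : ℕ} (ε : ℝ) (A2 : Matrix (Fin m) (Fin k) (ZMod 2))
    (s : Fin m → ZMod 2) (z : (Fin m ⊕ Fin k) → Option (ZMod 2)) : ℝ :=
  ∑ x : (Fin m ⊕ Fin k) → ZMod 2,
    (1 / 2 ^ (m + k) : ℝ) * (if (pcheck A2).mulVec x = s then 1 else 0) *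
      ∏ i, becW ε (z i) (x i)

/-- Conditional pmf of `S^m` given `Z^n = z^n`. -/
noncomputable def pcond {m k : ℕ} (ε : ℝ) (A2 : Matrix (Fin m) (Fin k) (ZMod 2))
    (z : (Fin m ⊕ Fin k) → Option (ZMod 2)) (s : Fin m → ZMod 2) : ℝ :=
  pSZbec ε A2 s z / ∑ s', pSZbec ε A2 s' z

theorem ent_uniform {α : Type*} [Fintype α] [DecidableEq α] (S : Finset α) :
    ent (fun a => if a ∈ S then ((#S : ℝ))⁻¹ else 0) = Real.logb 2 #S := by
  have hterm : ∀ a, (if a ∈ S then ((#S : ℝ))⁻¹ else 0) *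
      Real.logb 2 (if a ∈ S then (#S : ℝ)⁻¹ else 0) =
        if a ∈ S then (#S : ℝ)⁻¹ * Real.logb 2 (#S : ℝ)⁻¹ else 0 := fun a => by
    split_ifs <;> simp
  rcases S.eq_empty_or_nonempty with rfl | hS
  · simp [ent]
  · simp only [ent, hterm, Finset.sum_ite_mem, Finset.univ_inter, Finset.sum_const, nsmul_eq_mul,
      Real.logb_inv]
    field_simp [hS.card_pos.ne']

theorem div_sum_eq_ite_inv_card {α : Type*} [Fintype α] [DecidableEq α] (S : Finset α) {c : ℝ}
    (hc : c ≠ 0) {f : α → ℝ} (hf : ∀ a, f a = if a ∈ S then c else 0) (a : α) :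
    f a / ∑ b, f b = if a ∈ S then ((#S : ℝ))⁻¹ else 0 := by
  simp only [hf, Finset.sum_ite_mem, Finset.univ_inter, Finset.sum_const, nsmul_eq_mul]
  split_ifs with ha
  · have : (#S : ℝ) ≠ 0 := by exact_mod_cast (Finset.card_pos.mpr ⟨a, ha⟩).ne'
    field_simp
  · simp

namespace Submodule

variable {R M : Type*} [Ring R] [AddCommGroup M] [Module R M] [Fintype M] (U : Submodule R M)
  [DecidablePred (· ∈ U)]

theorem card_filter_and_sub_mem (P : M → Prop) [DecidablePred P] (x₀ : M) :
    #{x | P x ∧ x - x₀ ∈ U} = #{y : U | P (y + x₀)} := by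
  refine Finset.card_nbij' (fun x => if hx : x - x₀ ∈ U then ⟨x - x₀, hx⟩ else 0)
    (fun y => y + x₀) ?_ ?_ ?_ ?_ <;> intro _ _ <;> simp_all

theorem card_filter_sub_mem (x₀ : M) : #{x | x - x₀ ∈ U} = Nat.card U := by
  simpa [Nat.card_eq_fintype_card] using U.card_filter_and_sub_mem (fun _ => True) x₀

end Submodule

open Classical in
theorem LinearMap.card_filter_apply_eq_and_sub_mem {R M N : Type*} [Ring R] [AddCommGroup M]
    [Module R M] [AddCommGroup N] [Module R N] [Fintype M] [DecidableEq N]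
    (f : M →ₗ[R] N) (U : Submodule R M) [DecidablePred (· ∈ U)] (x₀ : M) (s : N) :
    #{x | f x = s ∧ x - x₀ ∈ U} =
      if s - f x₀ ∈ U.map f then Nat.card (LinearMap.ker (f.domRestrict U)) else 0 := by
  have htrans : #{x | f x = s ∧ x - x₀ ∈ U} = #{y | f.domRestrict U y = s - f x₀} := by
    rw [U.card_filter_and_sub_mem]
    congr 1 with y
    simp [eq_sub_iff_add_eq]
  rw [htrans]
  split_ifs with hs
  · rw [← LinearMap.range_domRestrict] at hs
    rw [AddMonoidHom.card_fiber_eq_of_mem_range (f.domRestrict U) hs ⟨0, map_zero _⟩,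
      Nat.card_eq_fintype_card, Fintype.card_subtype]
    simp only [LinearMap.mem_ker]
  · rw [Finset.card_eq_zero, Finset.filter_eq_empty_iff]
    rintro y - hy
    exact hs ⟨y, y.2, hy⟩

theorem AddMonoidHom.card_fiber_mul_card_of_surjective {M N F : Type*} [AddGroup M] [Fintype M]
    [AddMonoid N] [Fintype N] [DecidableEq N] [FunLike F M N] [AddMonoidHomClass F M N] (f : F)
    (hf : Function.Surjective f) (s : N) :
    #{x | f x = s} * Fintype.card N = Fintype.card M := by
  have hconst : ∀ t, #{x | f x = t} = #{x | f x = s} := fun t =>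
    AddMonoidHom.card_fiber_eq_of_mem_range f (hf t) (hf s)
  calc #{x | f x = s} * Fintype.card N = ∑ t : N, #{x | f x = t} := by simp [hconst, mul_comm]
    _ = Fintype.card M :=
      (Finset.card_eq_sum_card_fiberwise fun x _ => Finset.mem_univ (f x)).symm

theorem Pi.mem_span_single_image_iff {ι R : Type*} [DecidableEq ι] [Finite ι] [Semiring R]
    {E : Set ι} {x : ι → R} :
    x ∈ Submodule.span R ((fun i => Pi.single i 1) '' E) ↔ ∀ i ∉ E, x i = 0 := by
  refine ⟨fun hx i hi => ?_, fun hx => ?_⟩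
  · induction hx using Submodule.span_induction with
    | mem x h =>
      obtain ⟨j, hj, rfl⟩ := h
      exact Pi.single_eq_of_ne (by rintro rfl; exact hi hj) 1
    | zero => rfl
    | add u v _ _ hu hv => simp [hu, hv]
    | smul t u _ hu => simp [hu]
  · have := Fintype.ofFinite ι
    rw [← Finset.univ_sum_single x]
    refine Submodule.sum_mem _ fun i _ => ?_
    by_cases hi : i ∈ E
    · rw [← mul_one (x i), ← smul_eq_mul, Pi.single_smul']
      exact Submodule.smul_mem _ _ (Submodule.subset_span ⟨i, hi, rfl⟩)
    · simp [hx i hi]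

theorem becW_eq_mul_ite (ε : ℝ) (b : Option (ZMod 2)) (x : ZMod 2) :
    becW ε b x = (if b = none then ε else 1 - ε) * if b = none ∨ b = some x then 1 else 0 := by
  cases b <;> simp [becW]

theorem sum_becW (ε : ℝ) (x : ZMod 2) : ∑ b, becW ε b x = 1 := by
  simp [Fintype.sum_option, becW]

theorem sum_prod_becW {ι : Type*} [Fintype ι] [DecidableEq ι] (ε : ℝ) (x : ι → ZMod 2) :
    ∑ z : ι → Option (ZMod 2), ∏ i, becW ε (z i) (x i) = 1 := by
  rw [← Fintype.prod_sum fun i b => becW ε b (x i)]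
  simp only [sum_becW, Finset.prod_const_one]

theorem prod_becW {ι : Type*} [Fintype ι] (ε : ℝ) (z : ι → Option (ZMod 2)) (x : ι → ZMod 2) :
    ∏ i, becW ε (z i) (x i) =
      (∏ i, if z i = none then ε else 1 - ε) *
        if ∀ i, z i = none ∨ z i = some (x i) then 1 else 0 := by
  simp only [becW_eq_mul_ite, Finset.prod_mul_distrib, Finset.prod_boole, Finset.mem_univ,
    forall_const]

theorem forall_eq_none_or_eq_some_iff {ι R : Type*} [DecidableEq ι] [Finite ι] [Ring R]
    (z : ι → Option R) (x : ι → R) :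
    (∀ i, z i = none ∨ z i = some (x i)) ↔
      x - (fun i => (z i).getD 0) ∈
        Submodule.span R ((fun i => Pi.single i 1) '' {i | z i = none}) := by
  rw [Pi.mem_span_single_image_iff]
  refine forall_congr' fun i => ?_
  rcases hz : z i with _ | b <;> simp [hz, sub_eq_zero, eq_comm]

theorem pcheck_mulVecLin_surjective {m k : ℕ} (A2 : Matrix (Fin m) (Fin k) (ZMod 2)) :
    Function.Surjective (pcheck A2).mulVecLin := fun s => ⟨Sum.elim s 0, by
  funext j
  simp [Matrix.mulVec, dotProduct, pcheck, Fintype.sum_sum_type]⟩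

theorem sum_pSZbec {m k : ℕ} (ε : ℝ) (A2 : Matrix (Fin m) (Fin k) (ZMod 2))
    (s : Fin m → ZMod 2) :
    ∑ z, pSZbec ε A2 s z = ((2 : ℝ) ^ m)⁻¹ := by
  have hfiber := AddMonoidHom.card_fiber_mul_card_of_surjective _
    (pcheck_mulVecLin_surjective A2) s
  simp only [Matrix.mulVecLin_apply, Fintype.card_fun, ZMod.card, Fintype.card_sum,
    Fintype.card_fin] at hfiber
  calc ∑ z, pSZbec ε A2 s z
      = ∑ x, 1 / 2 ^ (m + k) * if (pcheck A2).mulVec x = s then (1 : ℝ) else 0 := by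
        simp only [pSZbec]
        rw [Finset.sum_comm]
        simp only [← Finset.mul_sum, sum_prod_becW, mul_one]
    _ = 1 / 2 ^ (m + k) * #{x | (pcheck A2).mulVec x = s} := by
        rw [← Finset.mul_sum, Finset.sum_boole]
    _ = ((2 : ℝ) ^ m)⁻¹ := by
        have hcard : (#{x | (pcheck A2).mulVec x = s} : ℝ) = 2 ^ k := by
          rw [pow_add, mul_comm] at hfiber
          exact_mod_cast Nat.eq_of_mul_eq_mul_left (by positivity) hfiber
        rw [hcard, pow_add]
        field_simp

open Classical in
theorem pSZbec_eq_card {m k : ℕ} (ε : ℝ) (A2 : Matrix (Fin m) (Fin k) (ZMod 2))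
    (s : Fin m → ZMod 2) (z : Fin m ⊕ Fin k → Option (ZMod 2)) :
    pSZbec ε A2 s z = 1 / 2 ^ (m + k) * (∏ i, if z i = none then ε else 1 - ε) *
      #{x | (pcheck A2).mulVecLin x = s ∧ x - (fun i => (z i).getD 0) ∈
        Submodule.span (ZMod 2) ((fun i => Pi.single i 1) '' {i | z i = none})} := by
  rw [pSZbec, Finset.natCast_card_filter, Finset.mul_sum]
  refine Finset.sum_congr rfl fun x _ => ?_
  simp only [prod_becW, forall_eq_none_or_eq_some_iff, Matrix.mulVecLin_apply]
  split_ifs <;> simp_all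

theorem Matrix.map_mulVecLin_span_single_image {R m n : Type*} [CommSemiring R] [Fintype n]
    [DecidableEq n] (M : Matrix m n R) (E : Set n) :
    (Submodule.span R ((fun i => Pi.single i 1) '' E)).map M.mulVecLin =
      Submodule.span R ((fun i j => M j i) '' E) := by
  rw [Submodule.map_span, Set.image_image]
  congr! with i
  simp

open Classical in
theorem pSZbec_eq_ite {m k : ℕ} {ε : ℝ} (hε0 : 0 < ε) (hε1 : ε < 1)
    (A2 : Matrix (Fin m) (Fin k) (ZMod 2)) (z : Fin m ⊕ Fin k → Option (ZMod 2)) :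
    ∃ c ≠ 0, ∀ s, pSZbec ε A2 s z =
      if s - (pcheck A2).mulVec (fun i => (z i).getD 0) ∈
        Submodule.span (ZMod 2) ((fun i j => pcheck A2 j i) '' {i | z i = none}) then c else 0 := by
  set U := Submodule.span (ZMod 2) ((fun i => Pi.single i (1 : ZMod 2)) '' {i | z i = none})
  have hweight : 0 < ∏ i, if z i = none then ε else 1 - ε :=
    Finset.prod_pos fun i _ => by split_ifs <;> linarith
  refine ⟨1 / 2 ^ (m + k) * (∏ i, if z i = none then ε else 1 - ε) *
    Nat.card (LinearMap.ker ((pcheck A2).mulVecLin.domRestrict U)), ?_, fun s => ?_⟩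
  · have := Nat.card_pos (α := LinearMap.ker ((pcheck A2).mulVecLin.domRestrict U))
    positivity
  · rw [pSZbec_eq_card, LinearMap.card_filter_apply_eq_and_sub_mem,
      Matrix.map_mulVecLin_span_single_image, Matrix.mulVecLin_apply, Nat.cast_ite, Nat.cast_zero,
      mul_ite, mul_zero]

theorem ent_pcond {m k : ℕ} {ε : ℝ} (hε0 : 0 < ε) (hε1 : ε < 1)
    (A2 : Matrix (Fin m) (Fin k) (ZMod 2)) (z : Fin m ⊕ Fin k → Option (ZMod 2)) :
    ent (pcond ε A2 z) = Module.finrank (ZMod 2)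
      (Submodule.span (ZMod 2) ((fun i j => pcheck A2 j i) '' {i | z i = none})) := by
  classical
  obtain ⟨c, hc, hpSZ⟩ := pSZbec_eq_ite hε0 hε1 A2 z
  set V := Submodule.span (ZMod 2) ((fun i j => pcheck A2 j i) '' {i | z i = none})
  set S : Finset (Fin m → ZMod 2) := {s | s - (pcheck A2).mulVec (fun i => (z i).getD 0) ∈ V}
  have hpcond : pcond ε A2 z = fun s => if s ∈ S then ((#S : ℝ))⁻¹ else 0 :=
    funext <| div_sum_eq_ite_inv_card (f := fun s => pSZbec ε A2 s z) S hc fun s => by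
      simp only [hpSZ, S, Finset.mem_filter, Finset.mem_univ, true_and]
  rw [hpcond, ent_uniform, V.card_filter_sub_mem, Nat.card_eq_fintype_card,
    Module.card_eq_pow_finrank (K := ZMod 2), ZMod.card 2]
  simp [Real.logb_pow]

theorem ent_sum_pSZbec {m k : ℕ} (ε : ℝ) (A2 : Matrix (Fin m) (Fin k) (ZMod 2)) :
    ent (fun s => ∑ z, pSZbec ε A2 s z) = m := by
  classical
  have hunif : (fun s => ∑ z, pSZbec ε A2 s z) =
      fun s => if s ∈ univ then ((#(univ : Finset (Fin m → ZMod 2)) : ℝ))⁻¹ else 0 := by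
    funext s
    simp [sum_pSZbec]
  rw [hunif, ent_uniform]
  simp [Real.logb_pow]

/-- Theorem 3: when Eve's channel is a BEC and coset coding with
`A = [I_m | A_2] = [a_1 … a_n]` is used, the conditional information leakage is
`L(z^n) = H(S^m) - H(S^m | Z^n = z^n) = m - rank [a_j : z_j = e]`. -/
theorem stmt11 {m k : ℕ} (ε : ℝ) (hε0 : 0 < ε) (hε1 : ε < 1)
    (A2 : Matrix (Fin m) (Fin k) (ZMod 2))
    (z : (Fin m ⊕ Fin k) → Option (ZMod 2)) :
    ent (fun s => ∑ z', pSZbec ε A2 s z') - ent (pcond ε A2 z)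
      = (m : ℝ) - (Module.finrank (ZMod 2)
          (Submodule.span (ZMod 2)
            ((fun i => fun j => pcheck A2 j i) '' {i | z i = none})) : ℝ) := by
  rw [ent_sum_pSZbec, ent_pcond hε0 hε1]
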